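/- Under the assumptions of strict convexity, minimizer θ*, μ = λ_min(∇²L(θ*)), and multiplicative Hessian continuity at scale R: for any θ satisfying either L(θ) - min L ≤ μR²/4 or ‖∇L(θ)‖₂ ≤ Rμ/2, the Polyak–Łojasiewicz inequality L(θ) - min L ≤ μ⁻¹‖∇L(θ)‖₂² holds. -/

import Mathlib

/-!
Restrict `L` to the ray `s ↦ θ* + s • e` through `θ`, with `‖e‖ = 1`: this gives `ψ` with
`ψ'(0) = 0` and `ψ'' > 0`. For `θ'` in the `R`-ball around `θ*`, every eigenvalue `λ`
(unit eigenvector `v`) of `H = ∇²L(θ')` satisfies `μ ≤ ⟪v, H* v⟫ = λ ⟪v, H⁻¹ H* v⟫ ≤ 2λ`,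
where `H* = ∇²L(θ*)`; hence `ψ'' ≥ μ/2` on `[0, R]`.
If `θ` lay beyond distance `R`, then `ψ` would already have grown by `μR²/4` and `ψ'` past `Rμ/2`,
against either smallness hypothesis. So `T = ‖θ - θ*‖ ≤ R`, and `μ/2`-strong convexity on `[0, T]`
gives `ψ(T) - ψ(0) ≤ T ψ'(T) - μT²/4 ≤ ψ'(T)² / μ`.
-/

open scoped InnerProductSpace
open Set

lemma monotoneOn_Icc_of_hasDerivAt_nonneg {g g' : ℝ → ℝ} {a b : ℝ}
    (hg : ∀ x, HasDerivAt g (g' x) x) (hg' : ∀ x ∈ Ioo a b, 0 ≤ g' x) :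
    MonotoneOn g (Icc a b) :=
  monotoneOn_of_hasDerivWithinAt_nonneg (convex_Icc a b)
    (fun x _ => (hg x).continuousAt.continuousWithinAt)
    (fun x _ => (hg x).hasDerivWithinAt) (by rwa [interior_Icc])

lemma mul_sub_le_sub_of_le_hasDerivAt {g g' : ℝ → ℝ} {a b m : ℝ}
    (hg : ∀ x, HasDerivAt g (g' x) x) (hm : ∀ x ∈ Icc a b, m ≤ g' x) (hab : a ≤ b) :
    m * (b - a) ≤ g b - g a := by
  have hmono : MonotoneOn (fun x => g x - m * x) (Icc a b) :=
    monotoneOn_Icc_of_hasDerivAt_nonneg (fun x => (hg x).sub ((hasDerivAt_id x).const_mul m))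
      (fun x hx => by simpa using hm x (Ioo_subset_Icc_self hx))
  have := hmono (left_mem_Icc.2 hab) (right_mem_Icc.2 hab) hab
  simp only at this
  linarith

lemma add_deriv_mul_add_sq_le_of_le_deriv2 {f f' f'' : ℝ → ℝ} {a b m : ℝ}
    (hf : ∀ x, HasDerivAt f (f' x) x) (hf' : ∀ x, HasDerivAt f' (f'' x) x)
    (hm : ∀ x ∈ Icc a b, m ≤ f'' x) (hab : a ≤ b) :
    f a + f' a * (b - a) + m / 2 * (b - a) ^ 2 ≤ f b := by
  have key : MonotoneOn (fun x => f x - f' a * x - m / 2 * (x - a) ^ 2) (Icc a b) := by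
    refine monotoneOn_Icc_of_hasDerivAt_nonneg (g' := fun x => f' x - f' a - m * (x - a))
      (fun x => ?_) fun x hx => ?_
    · exact (((hf x).fun_sub ((hasDerivAt_id' x).const_mul (f' a))).fun_sub
        ((((hasDerivAt_id' x).sub_const a).fun_pow 2).const_mul (m / 2))).congr_deriv (by ring)
    · have := mul_sub_le_sub_of_le_hasDerivAt hf'
        (fun y hy => hm y ⟨hy.1, hy.2.trans hx.2.le⟩) hx.1.le
      linarith
  have := key (left_mem_Icc.2 hab) (right_mem_Icc.2 hab) hab
  simp only [sub_self] at this
  linarith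

lemma sub_deriv_mul_add_sq_le_of_le_deriv2 {f f' f'' : ℝ → ℝ} {a b m : ℝ}
    (hf : ∀ x, HasDerivAt f (f' x) x) (hf' : ∀ x, HasDerivAt f' (f'' x) x)
    (hm : ∀ x ∈ Icc a b, m ≤ f'' x) (hab : a ≤ b) :
    f b - f' b * (b - a) + m / 2 * (b - a) ^ 2 ≤ f a := by
  have key : MonotoneOn (fun x => f' b * x + m / 2 * (b - x) ^ 2 - f x) (Icc a b) := by
    refine monotoneOn_Icc_of_hasDerivAt_nonneg (g' := fun x => f' b - m * (b - x) - f' x)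
      (fun x => ?_) fun x hx => ?_
    · exact ((((hasDerivAt_id' x).const_mul (f' b)).fun_add
        ((((hasDerivAt_id' x).const_sub b).fun_pow 2).const_mul (m / 2))).fun_sub
        (hf x)).congr_deriv (by ring)
    · have := mul_sub_le_sub_of_le_hasDerivAt hf'
        (fun y hy => hm y ⟨hx.1.le.trans hy.1, hy.2⟩) hx.2.le
      linarith
  have := key (left_mem_Icc.2 hab) (right_mem_Icc.2 hab) hab
  simp only [sub_self] at this
  linarith

theorem polyak_lojasiewicz_of_le_deriv2 {f f' f'' : ℝ → ℝ} {m R T G : ℝ}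
    (hf : ∀ x, HasDerivAt f (f' x) x) (hf' : ∀ x, HasDerivAt f' (f'' x) x)
    (hpos : ∀ x, 0 < f'' x) (h0 : f' 0 = 0) (hm : 0 < m) (hR : 0 ≤ R)
    (hmR : ∀ x ∈ Icc 0 R, m ≤ f'' x) (hT : 0 ≤ T) (hG : f' T ≤ G)
    (hsmall : f T - f 0 ≤ m * R ^ 2 / 2 ∨ G ≤ m * R) :
    f T - f 0 ≤ G ^ 2 / (2 * m) := by
  have hf'_mono : StrictMono f' := strictMono_of_hasDerivAt_pos hf' hpos
  have hTR : T ≤ R := by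
    by_contra! hRT
    have hf'R : m * R ≤ f' R := by
      simpa [h0] using mul_sub_le_sub_of_le_hasDerivAt hf' hmR hR
    rcases hsmall with hloss | hgrad
    · have hfR := add_deriv_mul_add_sq_le_of_le_deriv2 hf hf' hmR hR
      have hf_mono : StrictMonoOn f (Ici 0) :=
        strictMonoOn_of_hasDerivWithinAt_pos (convex_Ici 0)
          (fun x _ => (hf x).continuousAt.continuousWithinAt)
          (fun x _ => (hf x).hasDerivWithinAt)
          (fun x hx => by
            rw [interior_Ici] at hx
            exact h0 ▸ hf'_mono hx)
      have := hf_mono (mem_Ici.2 hR) (mem_Ici.2 hT) hRT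
      simp only [h0, zero_mul, sub_zero] at hfR
      nlinarith
    · linarith [hf'_mono hRT]
  have hfT := sub_deriv_mul_add_sq_le_of_le_deriv2 hf hf'
    (fun x hx => hmR x ⟨hx.1, hx.2.trans hTR⟩) hT
  have hf'T : 0 ≤ f' T := h0 ▸ hf'_mono.monotone hT
  have hGT : f' T * T ≤ G * T := mul_le_mul_of_nonneg_right hG hT
  rw [le_div_iff₀ (by positivity)]
  nlinarith [sq_nonneg (G - m * T)]

section

variable {E : Type*} [NormedAddCommGroup E] [InnerProductSpace ℝ E]

lemma LinearMap.IsSymmetric.mul_norm_sq_le_inner_self [FiniteDimensional ℝ E]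
    {A : E →ₗ[ℝ] E} (hA : A.IsSymmetric) {c : ℝ}
    (hc : ∀ (lam : ℝ) (v : E), ‖v‖ = 1 → A v = lam • v → c ≤ lam) (u : E) :
    c * ‖u‖ ^ 2 ≤ ⟪u, A u⟫_ℝ := by
  have hn : Module.finrank ℝ E = Module.finrank ℝ E := rfl
  set b := hA.eigenvectorBasis hn
  have hb : ∀ i, A (b i) = hA.eigenvalues hn i • b i := by
    intro i; exact_mod_cast hA.apply_eigenvectorBasis hn i
  have hA_expand : ⟪u, A u⟫_ℝ = ∑ i, hA.eigenvalues hn i * ⟪u, b i⟫_ℝ ^ 2 := by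
    rw [← b.sum_inner_mul_inner u (A u)]
    refine Finset.sum_congr rfl fun i _ => ?_
    rw [← hA, hb, real_inner_smul_left, real_inner_comm (b i) u]; ring
  have hnorm_expand : ‖u‖ ^ 2 = ∑ i, ⟪u, b i⟫_ℝ ^ 2 := by
    rw [← real_inner_self_eq_norm_sq, ← b.sum_inner_mul_inner u u]
    refine Finset.sum_congr rfl fun i _ => ?_
    rw [real_inner_comm (b i) u]; ring
  rw [hA_expand, hnorm_expand, Finset.mul_sum]
  exact Finset.sum_le_sum fun i _ =>
    mul_le_mul_of_nonneg_right (hc _ _ (b.orthonormal.1 i) (hb i)) (sq_nonneg _)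

lemma HasGradientAt.hasDerivAt_add_smul [CompleteSpace E] {f : E → ℝ} {g x v : E} {t : ℝ}
    (h : HasGradientAt f g (x + t • v)) :
    HasDerivAt (fun s : ℝ => f (x + s • v)) ⟪v, g⟫_ℝ t := by
  have hline : HasDerivAt (fun s : ℝ => x + s • v) v t := by
    simpa using ((hasDerivAt_id t).smul_const v).const_add x
  exact (h.hasFDerivAt.comp_hasDerivAt t hline).congr_deriv (real_inner_comm _ _)

lemma HasFDerivAt.hasDerivAt_inner_add_smul {G : E → E} {G' : E →L[ℝ] E} {x v : E} {t : ℝ}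
    (h : HasFDerivAt G G' (x + t • v)) :
    HasDerivAt (fun s : ℝ => ⟪v, G (x + s • v)⟫_ℝ) ⟪v, G' v⟫_ℝ t := by
  have hline : HasDerivAt (fun s : ℝ => x + s • v) v t := by
    simpa using ((hasDerivAt_id t).smul_const v).const_add x
  exact (innerSL ℝ v).hasFDerivAt.comp_hasDerivAt t (h.comp_hasDerivAt t hline)

lemma IsLocalMin.hasGradientAt_eq_zero [CompleteSpace E] {f : E → ℝ} {g x : E}
    (hmin : IsLocalMin f x) (h : HasGradientAt f g x) : g = 0 := by
  simpa using hmin.hasFDerivAt_eq_zero h.hasFDerivAt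

end

section

variable {n : Type*} [Fintype n] [DecidableEq n]

lemma Matrix.PosDef.inner_toEuclideanLin_pos {M : Matrix n n ℝ} (hM : M.PosDef)
    {v : EuclideanSpace ℝ n} (hv : v ≠ 0) : 0 < ⟪v, Matrix.toEuclideanLin M v⟫_ℝ := by
  rw [EuclideanSpace.inner_eq_star_dotProduct, dotProduct_comm]
  exact hM.dotProduct_mulVec_pos (by simpa using hv)

lemma Matrix.PosDef.eigenvalue_pos {M : Matrix n n ℝ} (hM : M.PosDef) {lam : ℝ}
    {v : EuclideanSpace ℝ n} (hv : ‖v‖ = 1) (hMv : Matrix.toEuclideanLin M v = lam • v) :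
    0 < lam := by
  have := hM.inner_toEuclideanLin_pos (v := v) (by rintro rfl; simp at hv)
  rwa [hMv, real_inner_smul_right, real_inner_self_eq_norm_sq, hv, one_pow, mul_one] at this

lemma Matrix.PosDef.div_mul_norm_sq_le_inner_of_opNorm_inv_mul_le {A B : Matrix n n ℝ}
    (hA : A.PosDef) {μ K : ℝ} (hB : ∀ u, μ * ‖u‖ ^ 2 ≤ ⟪u, Matrix.toEuclideanLin B u⟫_ℝ)
    (hK : 0 < K) (hAB : ‖(Matrix.toEuclideanLin (A⁻¹ * B)).toContinuousLinearMap‖ ≤ K)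
    (u : EuclideanSpace ℝ n) :
    μ / K * ‖u‖ ^ 2 ≤ ⟪u, Matrix.toEuclideanLin A u⟫_ℝ := by
  have hA_symm : (Matrix.toEuclideanLin A).IsSymmetric :=
    Matrix.isSymmetric_toEuclideanLin_iff.mpr hA.isHermitian
  refine hA_symm.mul_norm_sq_le_inner_self (fun lam v hv hAv => ?_) u
  have hlam := hA.eigenvalue_pos hv hAv
  set w := Matrix.toEuclideanLin (A⁻¹ * B) v
  have hBv : Matrix.toEuclideanLin B v = Matrix.toEuclideanLin A w := by
    conv_lhs => rw [← Matrix.mul_nonsing_inv_cancel_left A B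
      ((Matrix.isUnit_iff_isUnit_det A).mp hA.isUnit)]
    simp [w]
  have hw : ‖w‖ ≤ K := by
    have := (Matrix.toEuclideanLin (A⁻¹ * B)).toContinuousLinearMap.le_of_opNorm_le hAB v
    rwa [hv, mul_one] at this
  have : μ ≤ lam * K :=
    calc μ = μ * ‖v‖ ^ 2 := by rw [hv, one_pow, mul_one]
      _ ≤ ⟪v, Matrix.toEuclideanLin A w⟫_ℝ := hBv ▸ hB v
      _ = lam * ⟪v, w⟫_ℝ := by rw [← hA_symm, hAv, real_inner_smul_left]
      _ ≤ lam * K := by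
        gcongr
        exact (real_inner_le_norm v w).trans (by rw [hv, one_mul]; exact hw)
  rwa [div_le_iff₀ hK]

end

theorem sophia_small_loss_or_gradient_imply_PL_general
    (d : ℕ)
    (L : EuclideanSpace ℝ (Fin d) → ℝ)
    (grad : EuclideanSpace ℝ (Fin d) → EuclideanSpace ℝ (Fin d))
    (hess : EuclideanSpace ℝ (Fin d) → Matrix (Fin d) (Fin d) ℝ)
    (hgrad : ∀ θ, HasGradientAt L (grad θ) θ)
    (hhess : ∀ θ, HasFDerivAt grad ((Matrix.toEuclideanLin (hess θ)).toContinuousLinearMap) θ)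
    (hpd : ∀ θ, (hess θ).PosDef)
    (θstar : EuclideanSpace ℝ (Fin d))
    (hmin : ∀ θ, L θstar ≤ L θ)
    (μ : ℝ)
    (hμ : IsLeast {c : ℝ | ∃ v : EuclideanSpace ℝ (Fin d), ‖v‖ = 1 ∧
      Matrix.toEuclideanLin (hess θstar) v = c • v} μ)
    (R : ℝ) (hR : 0 < R)
    (hhessLip : ∀ θ θ' : EuclideanSpace ℝ (Fin d), ‖θ - θ'‖ ≤ R →
      ‖(Matrix.toEuclideanLin ((hess θ')⁻¹ * hess θ)).toContinuousLinearMap‖ ≤ 2)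
    (θ : EuclideanSpace ℝ (Fin d))
    (hsmall : L θ - L θstar ≤ μ * R ^ 2 / 4 ∨ ‖grad θ‖ ≤ R * μ / 2) :
    L θ - L θstar ≤ μ⁻¹ * ‖grad θ‖ ^ 2 := by
  have hμ_pos : 0 < μ := by
    obtain ⟨v, hv, hHv⟩ := hμ.1
    exact (hpd θstar).eigenvalue_pos hv hHv
  rcases eq_or_ne θ θstar with rfl | hne
  · rw [sub_self]; positivity
  have hgrad_star : grad θstar = 0 :=
    IsLocalMin.hasGradientAt_eq_zero (Filter.Eventually.of_forall hmin) (hgrad θstar)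
  have hH_star : ∀ u, μ * ‖u‖ ^ 2 ≤ ⟪u, Matrix.toEuclideanLin (hess θstar) u⟫_ℝ :=
    (Matrix.isSymmetric_toEuclideanLin_iff.mpr (hpd θstar).isHermitian).mul_norm_sq_le_inner_self
      fun _ v hv hHv => hμ.2 ⟨v, hv, hHv⟩
  set T := ‖θ - θstar‖
  set e := T⁻¹ • (θ - θstar)
  have hT : 0 < T := norm_pos_iff.mpr (sub_ne_zero.mpr hne)
  have he : ‖e‖ = 1 := by
    rw [norm_smul, norm_inv, Real.norm_of_nonneg hT.le]; exact inv_mul_cancel₀ hT.ne'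
  have hθ : θstar + T • e = θ := by simp [e, smul_smul, hT.ne']
  have hH_ball : ∀ s ∈ Set.Icc 0 R,
      μ / 2 ≤ ⟪e, Matrix.toEuclideanLin (hess (θstar + s • e)) e⟫_ℝ := by
    intro s hs
    have hdist : ‖θstar - (θstar + s • e)‖ ≤ R := by
      simpa [norm_smul, he, abs_of_nonneg hs.1] using hs.2
    simpa [he] using (hpd _).div_mul_norm_sq_le_inner_of_opNorm_inv_mul_le hH_star two_pos
      (hhessLip _ _ hdist) e
  have hG : ⟪e, grad (θstar + T • e)⟫_ℝ ≤ ‖grad θ‖ := by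
    simpa [hθ, he] using real_inner_le_norm e (grad θ)
  have hsmall' : L θ - L θstar ≤ μ / 2 * R ^ 2 / 2 ∨ ‖grad θ‖ ≤ μ / 2 * R := by
    rcases hsmall with h | h <;> [left; right] <;> linarith
  have key := polyak_lojasiewicz_of_le_deriv2 (f := fun s => L (θstar + s • e))
    (fun s => (hgrad _).hasDerivAt_add_smul) (fun s => (hhess _).hasDerivAt_inner_add_smul)
    (fun s => (hpd _).inner_toEuclideanLin_pos (by simp [← norm_ne_zero_iff, he]))
    (by simp [hgrad_star]) (half_pos hμ_pos) hR.le hH_ball hT.le hG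
    (by simpa only [hθ, zero_smul, add_zero] using hsmall')
  simp only [hθ, zero_smul, add_zero] at key
  convert key using 1
  field_simp

/-- Local Polyak–Łojasiewicz inequality. -/
theorem sophia_small_loss_or_gradient_imply_PL
    (d : ℕ)
    (L : EuclideanSpace ℝ (Fin d) → ℝ)
    (grad : EuclideanSpace ℝ (Fin d) → EuclideanSpace ℝ (Fin d))
    (hess : EuclideanSpace ℝ (Fin d) → Matrix (Fin d) (Fin d) ℝ)
    (hC2 : ContDiff ℝ 2 L)
    (hgrad : ∀ θ, HasGradientAt L (grad θ) θ)
    (hhess : ∀ θ, HasFDerivAt grad ((Matrix.toEuclideanLin (hess θ)).toContinuousLinearMap) θ)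
    (hconv : StrictConvexOn ℝ Set.univ L)
    (hpd : ∀ θ, (hess θ).PosDef)
    (θstar : EuclideanSpace ℝ (Fin d))
    (hmin : ∀ θ, L θstar ≤ L θ)
    (μ : ℝ)
    (hμ : IsLeast {c : ℝ | ∃ v : EuclideanSpace ℝ (Fin d), ‖v‖ = 1 ∧
      Matrix.toEuclideanLin (hess θstar) v = c • v} μ)
    (R : ℝ) (hR : 0 < R)
    (hhessLip : ∀ θ θ' : EuclideanSpace ℝ (Fin d), ‖θ - θ'‖ ≤ R →
      ‖(Matrix.toEuclideanLin ((hess θ')⁻¹ * hess θ)).toContinuousLinearMap‖ ≤ 2)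
    (θ : EuclideanSpace ℝ (Fin d))
    (hsmall : L θ - L θstar ≤ μ * R ^ 2 / 4 ∨ ‖grad θ‖ ≤ R * μ / 2) :
    L θ - L θstar ≤ μ⁻¹ * ‖grad θ‖ ^ 2 :=
  sophia_small_loss_or_gradient_imply_PL_general d L grad hess hgrad hhess hpd θstar hmin μ hμ R hR
    hhessLip θ hsmall
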